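/- arXiv:1704.04575 — 2 statements merged into one kernel-verified Lean document; each statement's English description precedes it below -/
import Mathlib

section
/- Let κ be a regular uncountable cardinal, let T be a tree of height κ, and let P be a κ-Knaster partial order. Suppose that for every α < κ there are p_α ∈ P and t_α ∈ T_α such that for all α, β < κ, if p_α and p_β are compatible in P then t_α and t_β are comparable in T. Then T has a cofinal branch. (This is the combinatorial core of the paper's Lemma 2.2, due to Kunen and Tall: a κ-Knaster forcing notion adds no cofinal branch to a κ-Aronszajn tree.) -/
universe u

/-- A tree order: the set of strict predecessors of every element is
well-ordered by `<`. -/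
def IsTreeOrder (T : Type u) [PartialOrder T] : Prop :=
  ∀ t : T, IsWellOrder {s : T // s < t} (· < ·)

/-- The height of an element of a tree: the order type of its set of strict
predecessors. -/
noncomputable def treeHeight {T : Type u} [PartialOrder T] (hT : IsTreeOrder T) (t : T) :
    Ordinal.{u} :=
  @Ordinal.type {s : T // s < t} (· < ·) (hT t)

/-- The `α`-th level of a tree: the set of elements of height `α`. -/
noncomputable def treeLevel {T : Type u} [PartialOrder T] (hT : IsTreeOrder T)
    (α : Ordinal.{u}) : Set T :=
  {t | treeHeight hT t = α}

/-- The tree has height `κ`: `κ` is the least ordinal whose level is empty. -/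
noncomputable def treeHasHeight {T : Type u} [PartialOrder T] (hT : IsTreeOrder T)
    (κ : Ordinal.{u}) : Prop :=
  treeLevel hT κ = ∅ ∧ ∀ α < κ, (treeLevel hT α).Nonempty

/-- A cofinal branch of a tree of height `κ`: a chain meeting every level
`α < κ`. -/
noncomputable def IsCofinalBranch {T : Type u} [PartialOrder T] (hT : IsTreeOrder T)
    (κ : Ordinal.{u}) (b : Set T) : Prop :=
  IsChain (· ≤ ·) b ∧ ∀ α < κ, ∃ x ∈ b, x ∈ treeLevel hT α

/-- Two elements of a partial order are compatible if they have a common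
lower bound. -/
def Compat {P : Type u} [PartialOrder P] (p q : P) : Prop :=
  ∃ r, r ≤ p ∧ r ≤ q

/-- `P` is `κ`-Knaster: every `κ`-indexed family of elements of `P` has a
subfamily of full cardinality `κ` whose members are pairwise compatible. -/
def IsKnaster (κ : Cardinal.{u}) (P : Type u) [PartialOrder P] : Prop :=
  ∀ p : κ.ord.ToType → P, ∃ I : Set κ.ord.ToType,
    Cardinal.mk I = κ ∧ ∀ a ∈ I, ∀ b ∈ I, Compat (p a) (p b)

/-!
Apply the Knaster property to `α ↦ p α`: it yields a set `I` of `κ` indices on which the `p α`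
are pairwise compatible, so the `t α` for `α ∈ I` form a chain. A subset of `κ` of size `κ` is
unbounded, since every initial segment of the initial ordinal `κ` has size `< κ`. The lower
closure of that chain is then a chain (predecessors of one node are comparable) that meets every
level below `κ`.
-/

open Cardinal Ordinal

theorem exists_le_mem_of_mk_eq {α : Type u} [LinearOrder α] [WellFoundedLT α]
    (hα : (#α).ord = typeLT α) {I : Set α} (hI : #I = #α) (x : α) : ∃ a ∈ I, x ≤ a := by
  by_contra! hbounded
  have : #I ≤ #(Set.Iio x) := Cardinal.mk_le_mk_of_subset fun a ha => hbounded a ha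
  exact (this.trans_lt (mk_Iio_lt x hα)).ne hI

namespace IsTreeOrder

variable {T : Type u} [PartialOrder T]

theorem le_total_of_le_of_le (hT : IsTreeOrder T) {w x y : T} (hx : x ≤ w) (hy : y ≤ w) :
    x ≤ y ∨ y ≤ x := by
  rcases hx.eq_or_lt with rfl | hx
  · exact Or.inr hy
  rcases hy.eq_or_lt with rfl | hy
  · exact Or.inl hx.le
  have := hT w
  rcases trichotomous_of (· < ·) (⟨x, hx⟩ : {s : T // s < w}) ⟨y, hy⟩ with h | h | h
  · exact Or.inl (Subtype.mk_lt_mk.1 h).le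
  · exact Or.inl (congrArg Subtype.val h).le
  · exact Or.inr (Subtype.mk_lt_mk.1 h).le

variable (hT : IsTreeOrder T)

theorem treeHeight_eq_typein {s w : T} (h : s < w) :
    treeHeight hT s = @typein {r : T // r < w} (· < ·) (hT w) ⟨s, h⟩ := by
  have := hT s; have := hT w
  rw [← @type_subrel {r : T // r < w} (· < ·) (hT w) ⟨s, h⟩]
  exact type_eq.2 ⟨{
    toFun := fun r => ⟨⟨r.1, r.2.trans h⟩, r.2⟩
    invFun := fun r => ⟨r.1.1, r.2⟩
    left_inv := fun _ => rfl
    right_inv := fun _ => rfl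
    map_rel_iff' := Iff.rfl }⟩

theorem exists_le_mem_treeLevel {w : T} {α : Ordinal.{u}} (hα : α ≤ treeHeight hT w) :
    ∃ s ≤ w, s ∈ treeLevel hT α := by
  rcases hα.eq_or_lt with rfl | hα
  · exact ⟨w, le_rfl, rfl⟩
  have := hT w
  set s : {r : T // r < w} := enum (· < ·) ⟨α, hα⟩
  refine ⟨s.1, s.2.le, ?_⟩
  change treeHeight hT s.1 = α
  rw [treeHeight_eq_typein hT s.2]
  exact typein_enum _ _

theorem isCofinalBranch_lowerClosure {κ : Ordinal.{u}} {A : Set T}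
    (hA : IsChain (· ≤ ·) A) (hunbounded : ∀ α < κ, ∃ a ∈ A, α ≤ treeHeight hT a) :
    IsCofinalBranch hT κ (lowerClosure A : Set T) := by
  constructor
  · rintro x ⟨a, ha, hxa⟩ y ⟨b, hb, hyb⟩ -
    rcases hA.total ha hb with h | h
    · exact hT.le_total_of_le_of_le (hxa.trans h) hyb
    · exact hT.le_total_of_le_of_le hxa (hyb.trans h)
  · intro α hα
    obtain ⟨a, ha, hαa⟩ := hunbounded α hα
    obtain ⟨s, hsa, hs⟩ := hT.exists_le_mem_treeLevel hαa
    exact ⟨s, ⟨a, ha, hsa⟩, hs⟩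

end IsTreeOrder

theorem knaster_adds_no_branch_general {T P : Type u} [PartialOrder T] [PartialOrder P]
    (κ : Cardinal.{u})
    (hT : IsTreeOrder T)
    (hknaster : IsKnaster κ P)
    (p : Ordinal.{u} → P) (t : Ordinal.{u} → T)
    (ht : ∀ α < κ.ord, t α ∈ treeLevel hT α)
    (hcompat : ∀ α < κ.ord, ∀ β < κ.ord,
      Compat (p α) (p β) → (t α ≤ t β ∨ t β ≤ t α)) :
    ∃ b : Set T, IsCofinalBranch hT κ.ord b := by
  let index (a : κ.ord.ToType) : Ordinal.{u} := (ToType.mk.symm a).1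
  obtain ⟨I, hI, hIcompat⟩ := hknaster (p ∘ index)
  refine ⟨_, hT.isCofinalBranch_lowerClosure (A := t ∘ index '' I) ?_ ?_⟩
  · rintro _ ⟨a, ha, rfl⟩ _ ⟨b, hb, rfl⟩ -
    exact hcompat _ (ToType.mk.symm a).2 _ (ToType.mk.symm b).2 (hIcompat a ha b hb)
  · intro α hα
    have hI' : #I = #κ.ord.ToType := by rw [hI, mk_ord_toType]
    obtain ⟨a, ha, hαa⟩ := exists_le_mem_of_mk_eq (by simp) hI' (ToType.mk ⟨α, hα⟩)
    refine ⟨t (index a), ⟨a, ha, rfl⟩, ?_⟩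
    rw [ht _ (ToType.mk.symm a).2]
    exact ToType.mk.le_symm_apply.2 hαa

/-- Kunen–Tall (combinatorial core of Lemma 2.2): if `κ` is regular
uncountable, `T` is a tree of height `κ`, `P` is `κ`-Knaster, and for every
`α < κ` there are `p α ∈ P` and `t α ∈ T_α` such that compatibility of
`p α, p β` implies comparability of `t α, t β`, then `T` has a cofinal
branch. -/
theorem knaster_adds_no_branch {T P : Type u} [PartialOrder T] [PartialOrder P]
    (κ : Cardinal.{u}) (hreg : κ.IsRegular) (hunc : Cardinal.aleph0 < κ)
    (hT : IsTreeOrder T) (hheight : treeHasHeight hT κ.ord)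
    (hknaster : IsKnaster κ P)
    (p : Ordinal.{u} → P) (t : Ordinal.{u} → T)
    (ht : ∀ α < κ.ord, t α ∈ treeLevel hT α)
    (hcompat : ∀ α < κ.ord, ∀ β < κ.ord,
      Compat (p α) (p β) → (t α ≤ t β ∨ t β ≤ t α)) :
    ∃ b : Set T, IsCofinalBranch hT κ.ord b :=
  knaster_adds_no_branch_general κ hT hknaster p t ht hcompat
end

section
/- (Kurepa's branch theorem, invoked in the proof of Lemma 2.1.) Let κ be a regular uncountable cardinal and let η be an infinite regular cardinal with η < κ. Then every tree of height κ all of whose levels have cardinality less than η has a cofinal branch. -/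
universe u

/-!
Say that a height `α` separates the level `γ` if nodes of height `γ` with the same predecessors
below `α` have the same predecessors. A level of fewer than `cof γ` nodes is separated by some
`α < γ`: each of the fewer than `cof γ` pairs of nodes splits below `γ`. Taking `γ < κ` of
cofinality `η` closed under a bounding function (a weak form of Fodor's lemma) yields one `α < κ`
separating unboundedly many levels. By pigeonhole on the level `α`, a single node `s` lies below
nodes of unboundedly many of these levels; above `s` such nodes have nested sets of predecessors,
whose union is the cofinal branch.
-/

open Cardinal Set

namespace Cardinal

theorem IsRegular.exists_unbounded_fiber {c : Cardinal.{u}} (hc : c.IsRegular) {ι : Type u}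
    (hι : #ι < c) (f : ∀ β < c.ord, ι) :
    ∃ i, ∀ β < c.ord, ∃ γ, ∃ hγ : γ < c.ord, β ≤ γ ∧ f γ hγ = i := by
  by_contra! h
  choose g hg_lt hg using h
  have hsup : ⨆ i, g i < c.ord := Ordinal.iSup_lt_of_lt_cof (by rwa [hc.cof_ord]) hg_lt
  exact hg (f _ hsup) _ hsup (Ordinal.le_iSup g _) rfl

theorem IsRegular.exists_closurePoint_cof_eq {κ η : Cardinal.{u}} (hκ : κ.IsRegular)
    (hη : η.IsRegular) (hηκ : η < κ) (B : Ordinal.{u} → Ordinal.{u})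
    (hB : ∀ a < κ.ord, B a < κ.ord) :
    ∃ o < κ.ord, o.cof = η ∧ ∀ a < o, B a < o := by
  let f : Ordinal.{u} → Ordinal.{u} := fun a => ⨆ b : Iio a, B b + 1
  have hf : ∀ a < κ.ord, f a < κ.ord := by
    intro a ha
    apply Ordinal.lift_iSup_add_one_lt_of_lt_cof
    · rw [Cardinal.mk_Iio_ordinal, ← Ordinal.lift_cof, hκ.cof_ord, lift_lift, lift_lt]
      exact lt_ord.mp ha
    · exact fun b => hB b (b.2.trans ha)
  have hlim : Order.IsSuccLimit η.ord := isSuccLimit_ord hη.aleph0_le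
  refine ⟨Ordinal.deriv f η.ord, deriv_lt_ord hκ (hη.aleph0_le.trans_lt hηκ).ne' hf
    (ord_lt_ord.mpr hηκ), ?_, ?_⟩
  · rw [Ordinal.cof_map_of_isNormal (Ordinal.isNormal_deriv f) hlim, hη.cof_ord]
  · intro a ha
    have : Small.{u} {i // i < η.ord} := Ordinal.small_Iio η.ord
    rw [Ordinal.deriv_limit f hlim, Ordinal.lt_iSup_iff] at ha
    obtain ⟨⟨i, hi⟩, hai⟩ := ha
    have hBa : B a < Ordinal.deriv f (i + 1) :=
      calc B a < f (Ordinal.deriv f i + 1) :=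
            (lt_add_one _).trans_le <|
              Ordinal.le_iSup (fun b : Iio _ => B b + 1) ⟨a, hai.trans (lt_add_one _)⟩
        _ ≤ Ordinal.deriv f (i + 1) := by
            rw [Ordinal.deriv_add_one]
            exact Ordinal.iterate_le_nfp f _ 1
    exact hBa.trans (Ordinal.deriv_strictMono f (hlim.add_one_lt hi))

end Cardinal

section TreeOrder

variable {T : Type u} [PartialOrder T]

theorem treeHeight_eq_typein (hT : IsTreeOrder T) {s t : T} (h : s < t) :
    treeHeight hT s = @Ordinal.typein {u : T // u < t} (· < ·) (hT t) ⟨s, h⟩ := by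
  have := hT t
  have := hT s
  refine Eq.trans ?_ (Ordinal.type_subrel _ _)
  let e : {u : T // u < s} ≃ ↥{b : {u : T // u < t} | b < ⟨s, h⟩} :=
    ⟨fun x => ⟨⟨x.1, x.2.trans h⟩,
        show (⟨x.1, x.2.trans h⟩ : {u : T // u < t}) < ⟨s, h⟩ from Subtype.mk_lt_mk.mpr x.2⟩,
     fun y => ⟨y.1.1, Subtype.coe_lt_coe.mpr y.2⟩, fun _ => rfl, fun _ => rfl⟩
  exact RelIso.ordinalType_congr ⟨e, Iff.rfl⟩

theorem treeHeight_strictMono (hT : IsTreeOrder T) : StrictMono (treeHeight hT) := by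
  intro s t h
  have := hT t
  rw [treeHeight_eq_typein hT h]
  exact Ordinal.typein_lt_type _ _

theorem exists_lt_of_lt_treeHeight (hT : IsTreeOrder T) {t : T} {α : Ordinal.{u}}
    (hα : α < treeHeight hT t) : ∃ s < t, treeHeight hT s = α := by
  have := hT t
  obtain ⟨x, hx⟩ := Ordinal.typein_surj (α := {s : T // s < t}) (· < ·) hα
  exact ⟨x.1, x.2, (treeHeight_eq_typein hT x.2).trans hx⟩

theorem exists_le_of_le_treeHeight (hT : IsTreeOrder T) {t : T} {α : Ordinal.{u}}
    (hα : α ≤ treeHeight hT t) : ∃ s ≤ t, treeHeight hT s = α := by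
  rcases hα.lt_or_eq with hα | rfl
  · obtain ⟨s, hst, hs⟩ := exists_lt_of_lt_treeHeight hT hα
    exact ⟨s, hst.le, hs⟩
  · exact ⟨t, le_rfl, rfl⟩

theorem isChain_Iic (hT : IsTreeOrder T) (t : T) : IsChain (· ≤ ·) (Iic t) := by
  have := hT t
  intro a (ha : a ≤ t) b (hb : b ≤ t) hab
  rcases ha.lt_or_eq with ha | rfl
  · rcases hb.lt_or_eq with hb | rfl
    · rcases trichotomous_of (· < ·) (⟨a, ha⟩ : {s : T // s < t}) ⟨b, hb⟩ with h | h | h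
      · exact Or.inl (Subtype.mk_lt_mk.mp h).le
      · exact absurd (congrArg Subtype.val h) hab
      · exact Or.inr (Subtype.mk_lt_mk.mp h).le
    · exact Or.inl ha.le
  · exact Or.inr hb

theorem le_of_le_of_treeHeight_le (hT : IsTreeOrder T) {s p t : T} (hs : s ≤ t) (hp : p ≤ t)
    (h : treeHeight hT s ≤ treeHeight hT p) : s ≤ p := by
  rcases (isChain_Iic hT t).total hs hp with hsp | hps
  · exact hsp
  · rcases hps.lt_or_eq with hps | rfl
    · exact absurd h (treeHeight_strictMono hT hps).not_ge
    · exact le_rfl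

theorem lt_iff_lt_of_le_of_treeHeight_lt (hT : IsTreeOrder T) {r s t : T} (hst : s ≤ t)
    (hr : treeHeight hT r < treeHeight hT s) : r < t ↔ r < s :=
  ⟨fun hrt => (le_of_le_of_treeHeight_le hT hrt.le hst hr.le).lt_of_ne
    (by rintro rfl; exact hr.false), fun hrs => hrs.trans_le hst⟩

-- Levels need not be Hausdorff: distinct nodes of limit height may have the same predecessors.
def SeparatesLevel (hT : IsTreeOrder T) (α γ : Ordinal.{u}) : Prop :=
  ∀ x ∈ treeLevel hT γ, ∀ y ∈ treeLevel hT γ,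
    (∀ s, treeHeight hT s < α → (s < x ↔ s < y)) → Iio x = Iio y

theorem exists_separatesLevel (hT : IsTreeOrder T) {γ : Ordinal.{u}} (hcof : ℵ₀ ≤ γ.cof)
    (hlevel : #(treeLevel hT γ) < γ.cof) : ∃ α < γ, SeparatesLevel hT α γ := by
  have hγ : 0 < γ := Ordinal.cof_pos.mp (aleph0_pos.trans_le hcof)
  have hsplit : ∀ p : treeLevel hT γ × treeLevel hT γ, ∃ δ < γ, Iio p.1.1 ≠ Iio p.2.1 →
      ∃ s, treeHeight hT s = δ ∧ ¬(s < p.1.1 ↔ s < p.2.1) := by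
    rintro ⟨⟨x, hx : treeHeight hT x = γ⟩, ⟨y, hy : treeHeight hT y = γ⟩⟩
    by_cases hxy : Iio x = Iio y
    · exact ⟨0, hγ, fun h => absurd hxy h⟩
    · obtain ⟨s, hs⟩ := not_forall.mp (mt Set.ext hxy)
      have hsγ : treeHeight hT s < γ := by
        by_cases hsx : s < x
        · exact hx ▸ treeHeight_strictMono hT hsx
        · exact hy ▸ treeHeight_strictMono hT (by simpa [hsx] using hs)
      exact ⟨_, hsγ, fun _ => ⟨s, rfl, hs⟩⟩
  choose δ hδγ hδ using hsplit
  refine ⟨⨆ p, δ p + 1, Ordinal.iSup_add_one_lt_of_lt_cof ?_ hδγ, ?_⟩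
  · rw [mk_prod, lift_id]
    exact mul_lt_of_lt hcof hlevel hlevel
  · intro x hx y hy hagree
    by_contra hxy
    obtain ⟨s, hs, hne⟩ := hδ (⟨x, hx⟩, ⟨y, hy⟩) hxy
    exact hne (hagree s (hs ▸ Ordinal.lt_iSup_add_one_iff.mpr ⟨_, le_rfl⟩))

theorem exists_separatesLevel_unbounded (hT : IsTreeOrder T) {κ η : Cardinal.{u}}
    (hκ : κ.IsRegular) (hη : η.IsRegular) (hηκ : η < κ)
    (hlevels : ∀ α, #(treeLevel hT α) < η) :
    ∃ α < κ.ord, ∀ β < κ.ord, ∃ γ, β ≤ γ ∧ γ < κ.ord ∧ SeparatesLevel hT α γ := by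
  by_contra! h
  have hbound : ∀ α, ∃ β < κ.ord,
      α < κ.ord → ∀ γ, β ≤ γ → γ < κ.ord → ¬SeparatesLevel hT α γ := by
    intro α
    by_cases hα : α < κ.ord
    · obtain ⟨β, hβ, H⟩ := h α hα
      exact ⟨β, hβ, fun _ => H⟩
    · exact ⟨0, hκ.ord_pos, fun h => absurd h hα⟩
  choose B hBκ hB using hbound
  obtain ⟨γ, hγκ, hγcof, hγB⟩ := hκ.exists_closurePoint_cof_eq hη hηκ B fun a _ => hBκ a
  obtain ⟨α, hαγ, hsep⟩ :=
    exists_separatesLevel hT (hγcof ▸ hη.aleph0_le) (hγcof ▸ hlevels γ)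
  exact hB α (hαγ.trans hγκ) γ (hγB α hαγ).le hγκ hsep

theorem exists_mem_treeLevel_unbounded_above (hT : IsTreeOrder T) {κ : Cardinal.{u}}
    (hκ : κ.IsRegular) (hne : ∀ γ < κ.ord, (treeLevel hT γ).Nonempty) {α : Ordinal.{u}}
    (hακ : α < κ.ord) (hα : #(treeLevel hT α) < κ) {S : Set Ordinal.{u}}
    (hS : ∀ β < κ.ord, ∃ γ ∈ S, β ≤ γ ∧ γ < κ.ord) :
    ∃ s ∈ treeLevel hT α,
      ∀ β < κ.ord, ∃ x, s ≤ x ∧ β ≤ treeHeight hT x ∧ treeHeight hT x ∈ S := by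
  have H : ∀ β < κ.ord, ∃ s : treeLevel hT α, ∃ x,
      s.1 ≤ x ∧ β ≤ treeHeight hT x ∧ treeHeight hT x ∈ S := by
    intro β hβ
    obtain ⟨γ, hγS, hβγ, hγκ⟩ := hS (max β α) (max_lt hβ hακ)
    obtain ⟨x, hx : treeHeight hT x = γ⟩ := hne γ hγκ
    obtain ⟨s, hsx, hs⟩ := exists_le_of_le_treeHeight hT (hx ▸ le_of_max_le_right hβγ)
    exact ⟨⟨s, hs⟩, x, hsx, hx ▸ le_of_max_le_left hβγ, hx ▸ hγS⟩
  choose s x hsx hβx hxS using H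
  obtain ⟨s₀, hs₀⟩ := hκ.exists_unbounded_fiber hα s
  refine ⟨s₀, s₀.2, fun β hβ => ?_⟩
  obtain ⟨γ, hγ, hβγ, rfl⟩ := hs₀ β hβ
  exact ⟨x γ hγ, hsx γ hγ, hβγ.trans (hβx γ hγ), hxS γ hγ⟩

theorem Iio_subset_Iio_of_separatesLevel (hT : IsTreeOrder T) {s x y : T} (hsx : s ≤ x)
    (hsy : s ≤ y) (hsep : SeparatesLevel hT (treeHeight hT s) (treeHeight hT x))
    (hxy : treeHeight hT x ≤ treeHeight hT y) : Iio x ⊆ Iio y := by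
  obtain ⟨z, hzy, hz⟩ := exists_le_of_le_treeHeight hT hxy
  have hsz : s ≤ z :=
    le_of_le_of_treeHeight_le hT hsy hzy (hz ▸ (treeHeight_strictMono hT).monotone hsx)
  have hxz : Iio x = Iio z := hsep x rfl z hz fun r hr => by
    rw [lt_iff_lt_of_le_of_treeHeight_lt hT hsx hr, lt_iff_lt_of_le_of_treeHeight_lt hT hsz hr]
  rw [hxz]
  exact fun r hr => hr.trans_le hzy

theorem isCofinalBranch_biUnion_Iio (hT : IsTreeOrder T) {κ : Ordinal.{u}} {X : Set T}
    (hX : ∀ α < κ, ∃ x ∈ X, α < treeHeight hT x)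
    (hcoh : ∀ x ∈ X, ∀ y ∈ X, treeHeight hT x ≤ treeHeight hT y → Iio x ⊆ Iio y) :
    IsCofinalBranch hT κ (⋃ x ∈ X, Iio x) := by
  refine ⟨fun a ha b hb _ => ?_, fun α hα => ?_⟩
  · simp only [mem_iUnion] at ha hb
    obtain ⟨x, hx, hax⟩ := ha
    obtain ⟨y, hy, hby⟩ := hb
    rcases le_total (treeHeight hT x) (treeHeight hT y) with h | h
    · exact (isChain_Iic hT y).total (hcoh x hx y hy h hax).le hby.le
    · exact (isChain_Iic hT x).total hax.le (hcoh y hy x hx h hby).le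
  · obtain ⟨x, hx, hαx⟩ := hX α hα
    obtain ⟨s, hsx, hs⟩ := exists_lt_of_lt_treeHeight hT hαx
    exact ⟨s, mem_biUnion hx hsx, hs⟩

end TreeOrder

theorem kurepa_branch_general {T : Type u} [PartialOrder T]
    (κ η : Cardinal.{u}) (hκreg : κ.IsRegular)
    (hηreg : η.IsRegular) (hηκ : η < κ)
    (hT : IsTreeOrder T) (hheight : treeHasHeight hT κ.ord)
    (hlevels : ∀ α : Ordinal.{u}, Cardinal.mk (treeLevel hT α) < η) :
    ∃ b : Set T, IsCofinalBranch hT κ.ord b := by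
  obtain ⟨α, hακ, hsep⟩ := exists_separatesLevel_unbounded hT hκreg hηreg hηκ hlevels
  obtain ⟨s, hs, hX⟩ := exists_mem_treeLevel_unbounded_above hT hκreg hheight.2 hακ
    ((hlevels α).trans hηκ) (S := {γ | SeparatesLevel hT α γ}) fun β hβ => by
      obtain ⟨γ, hβγ, hγκ, hγ⟩ := hsep β hβ
      exact ⟨γ, hγ, hβγ, hγκ⟩
  have hlim : Order.IsSuccLimit κ.ord := isSuccLimit_ord hκreg.aleph0_le
  refine ⟨_, isCofinalBranch_biUnion_Iio hT
    (X := {x | s ≤ x ∧ SeparatesLevel hT α (treeHeight hT x)}) (fun β hβ => ?_) ?_⟩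
  · obtain ⟨x, hsx, hβx, hx⟩ := hX (β + 1) (hlim.add_one_lt hβ)
    exact ⟨x, ⟨hsx, hx⟩, (lt_add_one β).trans_le hβx⟩
  · rintro x ⟨hsx, hxsep⟩ y ⟨hsy, -⟩
    exact Iio_subset_Iio_of_separatesLevel hT hsx hsy (hs ▸ hxsep)

/-- Kurepa's branch theorem (invoked in the proof of Lemma 2.1): if `κ` is
regular uncountable and `η < κ` is an infinite regular cardinal, then every
tree of height `κ` all of whose levels have cardinality `< η` has a cofinal
branch. -/
theorem kurepa_branch {T : Type u} [PartialOrder T]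
    (κ η : Cardinal.{u}) (hκreg : κ.IsRegular) (hκunc : Cardinal.aleph0 < κ)
    (hηreg : η.IsRegular) (hηinf : Cardinal.aleph0 ≤ η) (hηκ : η < κ)
    (hT : IsTreeOrder T) (hheight : treeHasHeight hT κ.ord)
    (hlevels : ∀ α : Ordinal.{u}, Cardinal.mk (treeLevel hT α) < η) :
    ∃ b : Set T, IsCofinalBranch hT κ.ord b :=
  kurepa_branch_general κ η hκreg hηreg hηκ hT hheight hlevels
end
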